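/- Every element of SL(2,ℂ) is a commutator: for every A ∈ SL(2,ℂ) there exist B, C ∈ SL(2,ℂ) with A = B C B⁻¹ C⁻¹. -/

import Mathlib

/-!
Commutators are stable under conjugation, and over an algebraically closed field every element
of `SL(2, K)` is conjugate, via an eigenvector, to some `A = !![a, x; 0, a⁻¹]`. If
`a⁻¹ = s ^ 2 ≠ 1`, then `A * C` for `C = diag(s, s⁻¹)` has the same two distinct eigenvalues
`s⁻¹, s` as `C`, hence `A * C = B * C * B⁻¹`, i.e. `A = ⁅B, C⁆`, for some `B`. If `a = 1`,
conjugating `!![1, y; 0, 1]` by `diag(s, s⁻¹)` rescales `y` by `s ^ 2`, so `!![1, x; 0, 1]` is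
the commutator with `y = x / (s ^ 2 - 1)` for any `s ∉ {0, 1, -1}`.
-/

open Matrix Polynomial
open scoped MatrixGroups commutatorElement

theorem commutatorElement_eq_iff_mul_eq {G : Type*} [Group G] {a b c : G} :
    ⁅b, c⁆ = a ↔ b * c = a * c * b := by
  rw [commutatorElement_def, mul_inv_eq_iff_eq_mul, mul_inv_eq_iff_eq_mul]

theorem IsConj.mem_commutatorSet {G : Type*} [Group G] {g h : G} (hgh : IsConj g h)
    (hg : g ∈ commutatorSet G) : h ∈ commutatorSet G := by
  obtain ⟨c, rfl⟩ := isConj_iff.mp hgh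
  obtain ⟨a, b, rfl⟩ := hg
  exact ⟨_, _, (conjugate_commutatorElement a b c).symm⟩

namespace Matrix.SpecialLinearGroup

section CommRing

variable {R : Type*} [CommRing R]

def ofFinTwo (a b c d : R) (h : a * d - b * c = 1) : SL(2, R) :=
  ⟨!![a, b; c, d], by rwa [det_fin_two_of]⟩

@[simp]
theorem coe_ofFinTwo (a b c d : R) (h : a * d - b * c = 1) :
    (ofFinTwo a b c d h : Matrix (Fin 2) (Fin 2) R) = !![a, b; c, d] :=
  rfl

end CommRing

variable {K : Type*} [Field K]

theorem apply_zero_zero_mul_apply_one_one_of_apply_one_zero_eq_zero {A : SL(2, K)}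
    (hA : A 1 0 = 0) : A 0 0 * A 1 1 = 1 := by
  have := A.det_coe
  rwa [det_fin_two, hA, mul_zero, sub_zero] at this

theorem mem_commutatorSet_of_apply_one_zero_eq_zero_of_apply_one_one_eq_sq {A : SL(2, K)}
    (hA : A 1 0 = 0) {s : K} (hs : A 1 1 = s ^ 2) (hs1 : s ^ 2 ≠ 1) :
    A ∈ commutatorSet SL(2, K) := by
  have hdet := apply_zero_zero_mul_apply_one_one_of_apply_one_zero_eq_zero hA
  rw [hs] at hdet
  have hs0 : s ≠ 0 := by rintro rfl; simp at hdet
  have h00 : A 0 0 = (s ^ 2)⁻¹ := eq_inv_of_mul_eq_one_left hdet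
  have hs1' : s ^ 2 - 1 ≠ 0 := sub_ne_zero.mpr hs1
  refine ⟨ofFinTwo (A 0 1) (-(s ^ 2 - 1)⁻¹) (s ^ 2 - 1) 0 (by field_simp; ring),
    ofFinTwo s 0 0 s⁻¹ (by field_simp; ring), commutatorElement_eq_iff_mul_eq.mpr ?_⟩
  ext i j
  fin_cases i <;> fin_cases j <;>
    simp only [Fin.zero_eta, Fin.mk_one, coe_mul, coe_ofFinTwo, mul_apply, Fin.sum_univ_two,
      of_apply, cons_val', cons_val_zero, cons_val_one, cons_val_fin_one, hA, hs, h00] <;>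
    field_simp <;> ring

theorem mem_commutatorSet_of_apply_one_zero_eq_zero_of_apply_one_one_eq_one {A : SL(2, K)}
    (hA : A 1 0 = 0) (h11 : A 1 1 = 1) {s : K} (hs : s ≠ 0) (hs1 : s ^ 2 ≠ 1) :
    A ∈ commutatorSet SL(2, K) := by
  have h00 : A 0 0 = 1 := by
    simpa [h11] using apply_zero_zero_mul_apply_one_one_of_apply_one_zero_eq_zero hA
  have hs1' : s ^ 2 - 1 ≠ 0 := sub_ne_zero.mpr hs1
  refine ⟨ofFinTwo s 0 0 s⁻¹ (by field_simp; ring),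
    ofFinTwo 1 (A 0 1 / (s ^ 2 - 1)) 0 1 (by ring), commutatorElement_eq_iff_mul_eq.mpr ?_⟩
  ext i j
  fin_cases i <;> fin_cases j <;>
    simp only [Fin.zero_eta, Fin.mk_one, coe_mul, coe_ofFinTwo, mul_apply, Fin.sum_univ_two,
      of_apply, cons_val', cons_val_zero, cons_val_one, cons_val_fin_one, hA, h11, h00] <;>
    field_simp <;> ring

variable [IsAlgClosed K]

theorem mem_commutatorSet_of_apply_one_zero_eq_zero {A : SL(2, K)} (hA : A 1 0 = 0) :
    A ∈ commutatorSet SL(2, K) := by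
  by_cases h11 : A 1 1 = 1
  · classical
    obtain ⟨s, hs⟩ := Infinite.exists_notMem_finset ({0, 1, -1} : Finset K)
    simp only [Finset.mem_insert, Finset.mem_singleton, not_or] at hs
    exact mem_commutatorSet_of_apply_one_zero_eq_zero_of_apply_one_one_eq_one hA h11 hs.1
      (by simpa [sq_eq_one_iff] using hs.2)
  · obtain ⟨s, hs⟩ := IsAlgClosed.exists_pow_nat_eq (A 1 1) two_pos
    exact mem_commutatorSet_of_apply_one_zero_eq_zero_of_apply_one_one_eq_sq hA hs.symm (hs ▸ h11)

theorem exists_isConj_apply_one_zero_eq_zero (A : SL(2, K)) :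
    ∃ B : SL(2, K), IsConj A B ∧ B 1 0 = 0 := by
  by_cases hA : A 1 0 = 0
  · exact ⟨A, IsConj.refl A, hA⟩
  obtain ⟨l, hl⟩ := IsAlgClosed.exists_root (A : Matrix (Fin 2) (Fin 2) K).charpoly
    (by simp [charpoly_degree_eq_dim])
  rw [IsRoot, charpoly_fin_two, trace_fin_two, det_fin_two] at hl
  simp only [eval_add, eval_sub, eval_mul, eval_pow, eval_X, eval_C] at hl
  -- the first column of `P` is an eigenvector of `A` for the eigenvalue `l`
  set P := ofFinTwo (l - A 1 1) (-(A 1 0)⁻¹) (A 1 0) 0 (by field_simp; ring)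
  refine ⟨P⁻¹ * A * P, isConj_iff.mpr ⟨P⁻¹, by rw [inv_inv]⟩, ?_⟩
  simp only [P, coe_mul, coe_inv, coe_ofFinTwo, adjugate_fin_two_of, mul_apply, Fin.sum_univ_two,
    of_apply, cons_val', cons_val_zero, cons_val_one, cons_val_fin_one]
  linear_combination (A 1 0) * hl

theorem commutatorSet_eq_univ : commutatorSet SL(2, K) = Set.univ := by
  refine Set.eq_univ_of_forall fun A => ?_
  obtain ⟨B, hAB, hB⟩ := exists_isConj_apply_one_zero_eq_zero A
  exact hAB.symm.mem_commutatorSet (mem_commutatorSet_of_apply_one_zero_eq_zero hB)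

end Matrix.SpecialLinearGroup

theorem sl2C_commutator_surjective
    (A : Matrix.SpecialLinearGroup (Fin 2) ℂ) :
    ∃ B C : Matrix.SpecialLinearGroup (Fin 2) ℂ, A = B * C * B⁻¹ * C⁻¹ := by
  obtain ⟨B, C, hBC⟩ : A ∈ commutatorSet SL(2, ℂ) :=
    Matrix.SpecialLinearGroup.commutatorSet_eq_univ (K := ℂ) ▸ Set.mem_univ A
  exact ⟨B, C, hBC.symm⟩
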